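/- Suppose w ∈ D3 is orthogonal to the image of L. Then for all v1, v2 ∈ D2 one has K(L(v1,v2), w) = ημ·⟨v1,v2⟩·w; in particular K(v,w) = 0 for every v ∈ D2. -/

import Mathlib

open scoped RealInnerProductSpace
open Module Submodule

noncomputable section

variable {V : Type*} [NormedAddCommGroup V] [InnerProductSpace ℝ V]

/-- The curvature-type operator built from `ε` and the difference tensor `K`:
`R(X,Y)Z = ε(⟨Y,Z⟩X − ⟨X,Z⟩Y) − K(X,K(Y,Z)) + K(Y,K(X,Z))`. -/
def Rc (ε : ℝ) (K : V →ₗ[ℝ] V →ₗ[ℝ] V) (X Y Z : V) : V :=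
  ε • (⟪Y, Z⟫ • X - ⟪X, Z⟫ • Y) - K X (K Y Z) + K Y (K X Z)

/-- The bilinear map `L(v₁,v₂) = K(v₁,v₂) − (λ₁/2)⟨v₁,v₂⟩ e₁`. -/
def Lop (lam1 : ℝ) (e1 : V) (K : V →ₗ[ℝ] V →ₗ[ℝ] V) (v1 v2 : V) : V :=
  K v1 v2 - (lam1 / 2 * ⟪v1, v2⟫) • e1

/-- The distribution `D₂ = {v : v ⟂ e₁, K(e₁,v) = (λ₁/2)v}`. -/
def D2s (lam1 : ℝ) (e1 : V) (K : V →ₗ[ℝ] V →ₗ[ℝ] V) : Submodule ℝ V :=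
  (ℝ ∙ e1)ᗮ ⊓ Module.End.eigenspace (K e1) (lam1 / 2)

/-- The distribution `D₃ = {w : w ⟂ e₁, K(e₁,w) = μw}`. -/
def D3s (mu : ℝ) (e1 : V) (K : V →ₗ[ℝ] V →ₗ[ℝ] V) : Submodule ℝ V :=
  (ℝ ∙ e1)ᗮ ⊓ Module.End.eigenspace (K e1) mu

/-- The operator `P_v(ṽ) = K(v, L(v,ṽ))`, as a linear endomorphism of `V`. -/
def Pop (lam1 : ℝ) (e1 : V) (K : V →ₗ[ℝ] V →ₗ[ℝ] V) (v : V) : V →ₗ[ℝ] V :=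
  (K v) ∘ₗ (K v - (lam1 / 2) •
    ((LinearMap.toSpanSingleton ℝ V e1) ∘ₗ (innerSL ℝ v).toLinearMap))

/-- The eigenspace `V_v(c)` of `P_v` within the orthogonal complement of `v` in `D₂`. -/
def Vvs (lam1 c : ℝ) (e1 : V) (K : V →ₗ[ℝ] V →ₗ[ℝ] V) (v : V) : Submodule ℝ V :=
  D2s lam1 e1 K ⊓ (ℝ ∙ v)ᗮ ⊓ Module.End.eigenspace (Pop lam1 e1 K v) c

/-!
Write `Rc_{X,Y}` for `Z ↦ Rc ε K X Y Z`. Parallelism says that each `Rc_{X,Y}` is a derivation of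
`K`; so if it kills `e₁`, it commutes with `K e₁` and preserves its eigenspaces.
Since `K(v,w) ∈ D₂`, `|K(v,w)|² = ⟨K(v, K(v,w)), w⟩ = ⟨L(v, K(v,w)), w⟩ = 0`.
The splitting `V = ℝe₁ ⊕ D₂ ⊕ D₃` gives `K(e₁,e₁) = λ₁e₁`, and with `μ² − λ₁μ + ε = 0` the
derivation `Rc_{e₁,w}` kills `e₁` and `D₂`, hence `L(v₁,v₂)`; this puts `K(w, L(v₁,v₂))` in the
`μ`-eigenspace of `K e₁`. Likewise `Rc_{v₁,w}` kills `e₁`, so `Rc_{v₁,w} v₂` lies in the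
`λ₁/2`-eigenspace; but it equals `K(w, L(v₁,v₂)) + (λ₁μ/2 − ε)⟨v₁,v₂⟩w`, which lies in the
`μ`-eigenspace. As `λ₁/2 − μ = η > 0`, it vanishes, and `λ₁μ/2 − ε = −ημ`.
-/

section

variable {ε : ℝ} {K : V →ₗ[ℝ] V →ₗ[ℝ] V} {e1 : V}

theorem mem_D3s_iff {c : ℝ} {u : V} : u ∈ D3s c e1 K ↔ ⟪e1, u⟫ = 0 ∧ K e1 u = c • u := by
  rw [D3s, Submodule.mem_inf, Submodule.mem_orthogonal_singleton_iff_inner_right,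
    Module.End.mem_eigenspace_iff]

theorem inner_eq_zero_of_mem_D3s (hKcub : ∀ X Y Z : V, ⟪K X Y, Z⟫ = ⟪K X Z, Y⟫)
    {a b : ℝ} (hab : a ≠ b) {u v : V} (hu : u ∈ D3s a e1 K) (hv : v ∈ D3s b e1 K) :
    ⟪u, v⟫ = 0 := by
  have h := hKcub e1 u v
  rw [(mem_D3s_iff.1 hu).2, (mem_D3s_iff.1 hv).2, real_inner_smul_left, real_inner_smul_left,
    real_inner_comm u] at h
  exact (mul_eq_mul_right_iff.1 h).resolve_left hab

theorem K_self_eq_smul_of_sup_eq_top (hKcub : ∀ X Y Z : V, ⟪K X Y, Z⟫ = ⟪K X Z, Y⟫)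
    (he1 : ⟪e1, e1⟫ = 1) {a b : ℝ} (hsplit : (ℝ ∙ e1) ⊔ D3s a e1 K ⊔ D3s b e1 K = ⊤) :
    K e1 e1 = ⟪K e1 e1, e1⟫ • e1 := by
  have hperp : ∀ c, ∀ u ∈ D3s c e1 K, ⟪K e1 e1 - ⟪K e1 e1, e1⟫ • e1, u⟫ = 0 := by
    intro c u hu
    obtain ⟨hu1, hKu⟩ := mem_D3s_iff.1 hu
    rw [inner_sub_left, real_inner_smul_left, hKcub, hKu, real_inner_smul_left,
      real_inner_comm, hu1]
    ring
  suffices K e1 e1 - ⟪K e1 e1, e1⟫ • e1 ∈ (⊤ : Submodule ℝ V)ᗮ by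
    rwa [Submodule.top_orthogonal_eq_bot, Submodule.mem_bot, sub_eq_zero] at this
  rw [← hsplit, ← Submodule.inf_orthogonal, ← Submodule.inf_orthogonal]
  refine Submodule.mem_inf.2
    ⟨Submodule.mem_inf.2 ⟨?_, (Submodule.mem_orthogonal' _ _).2 (hperp a)⟩,
      (Submodule.mem_orthogonal' _ _).2 (hperp b)⟩
  rw [Submodule.mem_orthogonal_singleton_iff_inner_left, inner_sub_left, real_inner_smul_left,
    he1, mul_one, sub_self]

theorem Rc_sub_right (X Y Z U : V) : Rc ε K X Y (Z - U) = Rc ε K X Y Z - Rc ε K X Y U := by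
  simp only [Rc, inner_sub_right, map_sub]
  module

theorem Rc_smul_right (X Y Z : V) (c : ℝ) : Rc ε K X Y (c • Z) = c • Rc ε K X Y Z := by
  simp only [Rc, inner_smul_right, map_smul]
  module

theorem Rc_K_eq_zero
    (hpar : ∀ X Y Z U : V, Rc ε K X Y (K Z U) = K (Rc ε K X Y Z) U + K Z (Rc ε K X Y U))
    {X Y Z U : V} (hZ : Rc ε K X Y Z = 0) (hU : Rc ε K X Y U = 0) : Rc ε K X Y (K Z U) = 0 := by
  simp only [hpar, hZ, hU, map_zero, LinearMap.zero_apply, add_zero]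

theorem K_Rc_eq_smul_of_Rc_eq_zero
    (hpar : ∀ X Y Z U : V, Rc ε K X Y (K Z U) = K (Rc ε K X Y Z) U + K Z (Rc ε K X Y U))
    {X Y u : V} {c : ℝ} (he1 : Rc ε K X Y e1 = 0) (hu : K e1 u = c • u) :
    K e1 (Rc ε K X Y u) = c • Rc ε K X Y u := by
  rw [← Rc_smul_right, ← hu, hpar, he1, map_zero, LinearMap.zero_apply, zero_add]

theorem Rc_e1_left_eq_of_mem_D3s {c : ℝ} {Y Z : V} (hZ : Z ∈ D3s c e1 K) :
    Rc ε K e1 Y Z = (ε * ⟪Y, Z⟫) • e1 - K e1 (K Y Z) + c • K Y Z := by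
  obtain ⟨hZ1, hKZ⟩ := mem_D3s_iff.1 hZ
  rw [Rc, hKZ, hZ1, map_smul]
  module

theorem Rc_e1_right_eq_of_mem_D3s (hKsymm : ∀ X Y : V, K X Y = K Y X)
    {a b : ℝ} {X Y : V} (hX : X ∈ D3s a e1 K) (hY : Y ∈ D3s b e1 K) :
    Rc ε K X Y e1 = (a - b) • K X Y := by
  obtain ⟨hX1, hKX⟩ := mem_D3s_iff.1 hX
  obtain ⟨hY1, hKY⟩ := mem_D3s_iff.1 hY
  rw [Rc, real_inner_comm e1 Y, real_inner_comm e1 X, hX1, hY1, hKsymm Y e1, hKsymm X e1, hKX,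
    hKY, map_smul, map_smul, hKsymm Y X]
  module

theorem Rc_e1_left_right_eq_smul (hKsymm : ∀ X Y : V, K X Y = K Y X) {lam1 μ : ℝ} {w : V}
    (hKe1 : K e1 e1 = lam1 • e1) (he1 : ⟪e1, e1⟫ = 1) (hw : w ∈ D3s μ e1 K) :
    Rc ε K e1 w e1 = -(μ ^ 2 - lam1 * μ + ε) • w := by
  obtain ⟨hw1, hKw⟩ := mem_D3s_iff.1 hw
  rw [Rc, hKe1, map_smul, hKsymm w e1, hKw, map_smul, hKw, real_inner_comm e1 w, hw1, he1]
  module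

theorem K_eq_zero_of_inner_Lop_eq_zero (hKcub : ∀ X Y Z : V, ⟪K X Y, Z⟫ = ⟪K X Z, Y⟫)
    {lam1 : ℝ} {v w : V} (hw : ⟪e1, w⟫ = 0) (hL : ⟪Lop lam1 e1 K v (K v w), w⟫ = 0) :
    K v w = 0 := by
  rw [← inner_self_eq_zero (𝕜 := ℝ), hKcub, ← sub_add_cancel (K v (K v w)) _, ← Lop,
    inner_add_left, hL, real_inner_smul_left, hw, mul_zero, add_zero]

theorem Rc_eq_K_Lop_add (hKsymm : ∀ X Y : V, K X Y = K Y X) {lam1 μ : ℝ} {v1 v2 w : V}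
    (hw : K e1 w = μ • w) (hwv2 : ⟪w, v2⟫ = 0) (hKv2 : K v2 w = 0) :
    Rc ε K v1 w v2 = K w (Lop lam1 e1 K v1 v2) + ((lam1 / 2 * μ - ε) * ⟪v1, v2⟫) • w := by
  rw [Rc, hKsymm w v2, hKv2, map_zero, hwv2, ← sub_add_cancel (K v1 v2) _, ← Lop, map_add,
    map_smul, hKsymm w e1, hw]
  module

theorem K_e1_K_Lop_eq_smul (hKsymm : ∀ X Y : V, K X Y = K Y X)
    (hpar : ∀ X Y Z U : V, Rc ε K X Y (K Z U) = K (Rc ε K X Y Z) U + K Z (Rc ε K X Y U))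
    {lam1 μ : ℝ} {v1 v2 w : V} (hroot : μ ^ 2 - lam1 * μ + ε = 0)
    (hKe1 : K e1 e1 = lam1 • e1) (he1 : ⟪e1, e1⟫ = 1) (hw : w ∈ D3s μ e1 K)
    (hL : Lop lam1 e1 K v1 v2 ∈ D3s μ e1 K) (hwL : ⟪w, Lop lam1 e1 K v1 v2⟫ = 0)
    (hv1 : Rc ε K e1 w v1 = 0) (hv2 : Rc ε K e1 w v2 = 0) :
    K e1 (K w (Lop lam1 e1 K v1 v2)) = μ • K w (Lop lam1 e1 K v1 v2) := by
  have hRL : Rc ε K e1 w (Lop lam1 e1 K v1 v2) = 0 := by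
    rw [Lop, Rc_sub_right, Rc_smul_right, Rc_K_eq_zero hpar hv1 hv2,
      Rc_e1_left_right_eq_smul hKsymm hKe1 he1 hw, hroot, neg_zero, zero_smul, smul_zero, sub_zero]
  have h := Rc_e1_left_eq_of_mem_D3s (ε := ε) (Y := w) hL
  rw [hRL, hwL] at h
  linear_combination (norm := module) h

theorem K_Lop_eq_smul_of_K_e1_K_Lop (hKsymm : ∀ X Y : V, K X Y = K Y X)
    (hpar : ∀ X Y Z U : V, Rc ε K X Y (K Z U) = K (Rc ε K X Y Z) U + K Z (Rc ε K X Y U))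
    {lam1 μ : ℝ} {v1 v2 w : V} (hgap : lam1 / 2 ≠ μ) (hw : w ∈ D3s μ e1 K)
    (hv1 : v1 ∈ D2s lam1 e1 K) (hv2 : v2 ∈ D2s lam1 e1 K) (hKv1 : K v1 w = 0)
    (hKv2 : K v2 w = 0) (hwv2 : ⟪w, v2⟫ = 0)
    (hKwL : K e1 (K w (Lop lam1 e1 K v1 v2)) = μ • K w (Lop lam1 e1 K v1 v2)) :
    K w (Lop lam1 e1 K v1 v2) = ((ε - lam1 / 2 * μ) * ⟪v1, v2⟫) • w := by
  have hRv1 : Rc ε K v1 w e1 = 0 := by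
    rw [Rc_e1_right_eq_of_mem_D3s hKsymm hv1 hw, hKv1, smul_zero]
  have hA := Rc_eq_K_Lop_add (lam1 := lam1) (v1 := v1) (ε := ε) hKsymm (mem_D3s_iff.1 hw).2
    hwv2 hKv2
  have hhalf := K_Rc_eq_smul_of_Rc_eq_zero hpar hRv1 (mem_D3s_iff.1 hv2).2
  have hμ : K e1 (Rc ε K v1 w v2) = μ • Rc ε K v1 w v2 := by
    rw [hA, map_add, map_smul, hKwL, (mem_D3s_iff.1 hw).2]
    module
  have hA0 : Rc ε K v1 w v2 = 0 := by
    have h : (lam1 / 2 - μ) • Rc ε K v1 w v2 = 0 := by rw [sub_smul, ← hhalf, ← hμ, sub_self]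
    exact (smul_eq_zero.1 h).resolve_left (sub_ne_zero.2 hgap)
  rw [hA] at hA0
  linear_combination (norm := module) hA0

end

theorem stmt_7_general {V : Type*} [NormedAddCommGroup V] [InnerProductSpace ℝ V]
    (ε : ℝ)
    (K : V →ₗ[ℝ] V →ₗ[ℝ] V)
    (hKsymm : ∀ X Y : V, K X Y = K Y X)
    (hKcub : ∀ X Y Z : V, ⟪K X Y, Z⟫ = ⟪K X Z, Y⟫)
    (hpar : ∀ X Y Z U : V,
      Rc ε K X Y (K Z U) = K (Rc ε K X Y Z) U + K Z (Rc ε K X Y U))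
    (e1 : V) (he1 : ‖e1‖ = 1)
    (lam1 η μ : ℝ)
    (hlam1 : lam1 = ⟪K e1 e1, e1⟫)
    (hdisc : 0 < lam1 ^ 2 - 4 * ε)
    (hη : η = Real.sqrt (lam1 ^ 2 - 4 * ε) / 2)
    (hμ : μ = (lam1 - Real.sqrt (lam1 ^ 2 - 4 * ε)) / 2)
    (hsplit : (ℝ ∙ e1) ⊔ D2s lam1 e1 K ⊔ D3s μ e1 K = ⊤)
    (hLD3 : ∀ v1 ∈ D2s lam1 e1 K, ∀ v2 ∈ D2s lam1 e1 K,
      Lop lam1 e1 K v1 v2 ∈ D3s μ e1 K)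
    (hKD2 : ∀ v ∈ D2s lam1 e1 K, ∀ w ∈ D3s μ e1 K, K v w ∈ D2s lam1 e1 K)
    (w : V) (hw : w ∈ D3s μ e1 K)
    (hworth : ∀ v1 ∈ D2s lam1 e1 K, ∀ v2 ∈ D2s lam1 e1 K,
      ⟪Lop lam1 e1 K v1 v2, w⟫ = 0) :
    (∀ v1 ∈ D2s lam1 e1 K, ∀ v2 ∈ D2s lam1 e1 K,
        K (Lop lam1 e1 K v1 v2) w = (η * μ * ⟪v1, v2⟫) • w) ∧
    (∀ v ∈ D2s lam1 e1 K, K v w = 0) := by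
  have hsqrt := Real.sq_sqrt hdisc.le
  have hroot : μ ^ 2 - lam1 * μ + ε = 0 := by rw [hμ]; linear_combination hsqrt / 4
  have hcoef : ε - lam1 / 2 * μ = η * μ := by rw [hη, hμ]; linear_combination hsqrt / 4
  have hgap : lam1 / 2 ≠ μ := by rw [hμ]; linarith [Real.sqrt_pos.2 hdisc]
  have he1e1 : ⟪e1, e1⟫ = 1 := by rw [real_inner_self_eq_norm_sq, he1, one_pow]
  have hKe1 : K e1 e1 = lam1 • e1 := hlam1 ▸ K_self_eq_smul_of_sup_eq_top hKcub he1e1 hsplit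
  have hwv : ∀ v ∈ D2s lam1 e1 K, ⟪w, v⟫ = 0 := fun v hv =>
    inner_eq_zero_of_mem_D3s hKcub hgap.symm hw hv
  have hKvw : ∀ v ∈ D2s lam1 e1 K, K v w = 0 := fun v hv =>
    K_eq_zero_of_inner_Lop_eq_zero hKcub (mem_D3s_iff.1 hw).1 (hworth v hv _ (hKD2 v hv w hw))
  have hRw : ∀ v ∈ D2s lam1 e1 K, Rc ε K e1 w v = 0 := fun v hv => by
    rw [Rc_e1_left_eq_of_mem_D3s hv, hwv v hv, hKsymm w v, hKvw v hv]
    simp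
  refine ⟨fun v1 hv1 v2 hv2 => ?_, hKvw⟩
  have hKwL := K_e1_K_Lop_eq_smul hKsymm hpar hroot hKe1 he1e1 hw (hLD3 v1 hv1 v2 hv2)
    (real_inner_comm w _ ▸ hworth v1 hv1 v2 hv2) (hRw v1 hv1) (hRw v2 hv2)
  rw [hKsymm, K_Lop_eq_smul_of_K_e1_K_Lop hKsymm hpar hgap hw hv1 hv2 (hKvw v1 hv1)
    (hKvw v2 hv2) (hwv v2 hv2) hKwL, hcoef]

/-- Lemma 4.5: if `w ∈ D₃` is orthogonal to the image of `L`, then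
`K(L(v₁,v₂),w) = ημ⟨v₁,v₂⟩w`, and in particular `K(v,w) = 0` for every `v ∈ D₂`. -/
theorem stmt_7 {V : Type*} [NormedAddCommGroup V] [InnerProductSpace ℝ V]
    (n m : ℕ) (hn : finrank ℝ V = n) (hn2 : 2 ≤ n)
    (ε : ℝ) (hε : ε = 1 ∨ ε = -1)
    (K : V →ₗ[ℝ] V →ₗ[ℝ] V)
    (hKsymm : ∀ X Y : V, K X Y = K Y X)
    (hKcub : ∀ X Y Z : V, ⟪K X Y, Z⟫ = ⟪K X Z, Y⟫)
    (hpar : ∀ X Y Z U : V,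
      Rc ε K X Y (K Z U) = K (Rc ε K X Y Z) U + K Z (Rc ε K X Y U))
    (e1 : V) (he1 : ‖e1‖ = 1)
    (lam1 η μ τ : ℝ)
    (hlam1 : lam1 = ⟪K e1 e1, e1⟫) (hlam1pos : 0 < lam1)
    (hmax : ∀ u : V, ‖u‖ = 1 → ⟪K u u, u⟫ ≤ lam1)
    (hdisc : 0 < lam1 ^ 2 - 4 * ε)
    (hη : η = Real.sqrt (lam1 ^ 2 - 4 * ε) / 2)
    (hμ : μ = (lam1 - Real.sqrt (lam1 ^ 2 - 4 * ε)) / 2)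
    (hτ : τ = η * (η + lam1 / 2) / 4)
    (hm2 : 2 ≤ m) (hmn : m ≤ n - 1)
    (hdimD2 : finrank ℝ (D2s lam1 e1 K) = m - 1)
    (hsplit : (ℝ ∙ e1) ⊔ D2s lam1 e1 K ⊔ D3s μ e1 K = ⊤)
    (hLD3 : ∀ v1 ∈ D2s lam1 e1 K, ∀ v2 ∈ D2s lam1 e1 K,
      Lop lam1 e1 K v1 v2 ∈ D3s μ e1 K)
    (hKD2 : ∀ v ∈ D2s lam1 e1 K, ∀ w ∈ D3s μ e1 K, K v w ∈ D2s lam1 e1 K)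
    (w : V) (hw : w ∈ D3s μ e1 K)
    (hworth : ∀ v1 ∈ D2s lam1 e1 K, ∀ v2 ∈ D2s lam1 e1 K,
      ⟪Lop lam1 e1 K v1 v2, w⟫ = 0) :
    (∀ v1 ∈ D2s lam1 e1 K, ∀ v2 ∈ D2s lam1 e1 K,
        K (Lop lam1 e1 K v1 v2) w = (η * μ * ⟪v1, v2⟫) • w) ∧
    (∀ v ∈ D2s lam1 e1 K, K v w = 0) :=
  stmt_7_general ε K hKsymm hKcub hpar e1 he1 lam1 η μ hlam1 hdisc hη hμ hsplit hLD3 hKD2 w hw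
    hworth

end
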